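/- Let G be a follower-separated, synchronizing, deterministic presentation over a finite alphabet Σ with n vertices. Then ⟨G⟩ is a shift of finite type if and only if ⟨G⟩ is (n² − n)-step. -/
import Mathlib


/-- A labeled graph over vertex type `V` and alphabet `A`, given by its
labeled-edge relation: `Edge p a q` means there is an edge labeled `a`
from `p` to `q`. -/
structure LabeledGraph (V A : Type) where
  Edge : V → A → V → Prop

namespace LabeledGraph

variable {V A : Type}

/-- `G.Walk p w q` : there is a (finite) path from `p` to `q` labeled `w`. -/
def Walk (G : LabeledGraph V A) : V → List A → V → Prop
  | p, [], q => p = q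
  | p, a :: w, q => ∃ r, G.Edge p a r ∧ Walk G r w q

/-- The follower set of a vertex: labels of finite paths starting at `q`. -/
def follower (G : LabeledGraph V A) (q : V) : Set (List A) :=
  { w | ∃ q', G.Walk q w q' }

/-- The transition action on sets of vertices: `S·w`. -/
def transSet (G : LabeledGraph V A) (S : Set V) (w : List A) : Set V :=
  { q' | ∃ q ∈ S, G.Walk q w q' }

/-- `G` is deterministic (right-resolving). -/
def Deterministic (G : LabeledGraph V A) : Prop :=
  ∀ p a q q', G.Edge p a q → G.Edge p a q' → q = q'

/-- `G` is essential: every vertex has an outgoing and an incoming edge. -/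
def Essential (G : LabeledGraph V A) : Prop :=
  ∀ q, (∃ a r, G.Edge q a r) ∧ (∃ a p, G.Edge p a q)

/-- The sofic shift presented by `G`: labels of bi-infinite paths. -/
def shift (G : LabeledGraph V A) : Set (ℤ → A) :=
  { x | ∃ v : ℤ → V, ∀ j : ℤ, G.Edge (v j) (x j) (v (j + 1)) }

/-- `w` is a synchronizing word for `G`: `Q_G · w` is a singleton. -/
def SyncWord (G : LabeledGraph V A) (w : List A) : Prop :=
  ∃ r, G.transSet Set.univ w = {r}

/-- A vertex `q` is synchronizing: some word synchronizes to `q`. -/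
def SyncVertex (G : LabeledGraph V A) (q : V) : Prop :=
  ∃ w, G.transSet Set.univ w = {q}

/-- `G` is synchronizing: every vertex is synchronizing. -/
def Synchronizing (G : LabeledGraph V A) : Prop :=
  ∀ q, G.SyncVertex q

/-- `G` is follower-separated. -/
def FollowerSeparated (G : LabeledGraph V A) : Prop :=
  ∀ p q, G.follower p = G.follower q → p = q

/-- `G` is irreducible (strongly connected). -/
def StronglyConnected (G : LabeledGraph V A) : Prop :=
  ∀ p q, ∃ w, G.Walk p w q

/-- `q` is reachable from `p`. -/
def Reachable (G : LabeledGraph V A) (p q : V) : Prop :=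
  ∃ w, G.Walk p w q

/-- `C` is an irreducible component: an equivalence class of mutual reachability. -/
def IsIrredComponent (G : LabeledGraph V A) (C : Set V) : Prop :=
  ∃ p, C = { q | G.Reachable p q ∧ G.Reachable q p }

/-- `C` is terminal: everything reachable from `C` lies in `C`. -/
def TerminalSet (G : LabeledGraph V A) (C : Set V) : Prop :=
  ∀ p ∈ C, ∀ q, G.Reachable p q → q ∈ C

/-- `C` is initial: everything that reaches `C` lies in `C`. -/
def InitialSet (G : LabeledGraph V A) (C : Set V) : Prop :=
  ∀ q ∈ C, ∀ p, G.Reachable p q → p ∈ C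

/-- Subgraph induced by a set `P` of vertices. -/
def induce (G : LabeledGraph V A) (P : Set V) : LabeledGraph P A where
  Edge := fun p a q => G.Edge p.1 a q.1

/-- The graph `Ĝ`: vertices are ordered pairs of distinct vertices of `G`,
with an edge labeled `a` from `(p₁,p₂)` to `(q₁,q₂)` iff `G` has edges labeled
`a` from `p₁` to `q₁` and from `p₂` to `q₂`. -/
def pairGraph (G : LabeledGraph V A) : LabeledGraph { pq : V × V // pq.1 ≠ pq.2 } A where
  Edge := fun x a y => G.Edge x.1.1 a y.1.1 ∧ G.Edge x.1.2 a y.1.2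

end LabeledGraph

/-- The word `w` appears in the bi-infinite sequence `x`. -/
def AppearsIn {A : Type} (w : List A) (x : ℤ → A) : Prop :=
  ∃ i : ℤ, ∀ n : Fin w.length, x (i + (n : ℕ)) = w.get n

/-- The language of a subset of the full shift: all finite words appearing
in some point of `X`. -/
def lang {A : Type} (X : Set (ℤ → A)) : Set (List A) :=
  { w | ∃ x ∈ X, AppearsIn w x }

/-- `X` is a shift space. -/
def IsShiftSpace {A : Type} (X : Set (ℤ → A)) : Prop :=
  ∃ F : Set (List A), X = { x | ∀ w ∈ F, ¬ AppearsIn w x }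

/-- `X` is a shift of finite type. -/
def IsSFT {A : Type} (X : Set (ℤ → A)) : Prop :=
  ∃ F : Set (List A), F.Finite ∧ X = { x | ∀ w ∈ F, ¬ AppearsIn w x }

/-- `w` is intrinsically synchronizing for `X`. -/
def IntrinsicallySync {A : Type} (X : Set (ℤ → A)) (w : List A) : Prop :=
  w ∈ lang X ∧ ∀ u v, u ++ w ∈ lang X → w ++ v ∈ lang X → u ++ (w ++ v) ∈ lang X

/-- `X` is an irreducible shift space. -/
def IrreducibleShift {A : Type} (X : Set (ℤ → A)) : Prop :=
  ∀ u ∈ lang X, ∀ v ∈ lang X, ∃ w, u ++ (w ++ v) ∈ lang X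

/-- The follower set of a word `u` in `X`. -/
def followerX {A : Type} (X : Set (ℤ → A)) (u : List A) : Set (List A) :=
  { w | u ++ w ∈ lang X }

/-- `X` is `M`-step: every word of `B(X)` of length at least `M` is
intrinsically synchronizing for `X`. -/
def MStep {A : Type} (X : Set (ℤ → A)) (M : ℕ) : Prop :=
  ∀ w ∈ lang X, M ≤ w.length → IntrinsicallySync X w


/-! ### Auxiliary lemmas -/

section Aux

variable {V A : Type}

namespace LabeledGraph

lemma walk_append (G : LabeledGraph V A) {p q r : V} {u v : List A}
    (hu : G.Walk p u q) (hv : G.Walk q v r) : G.Walk p (u ++ v) r := by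
  induction u generalizing p with
  | nil => cases hu; simpa using hv
  | cons a u ih =>
    obtain ⟨s, hs, hw⟩ := hu
    exact ⟨s, hs, ih hw⟩

lemma walk_split (G : LabeledGraph V A) {p r : V} {u v : List A}
    (h : G.Walk p (u ++ v) r) : ∃ q, G.Walk p u q ∧ G.Walk q v r := by
  induction u generalizing p with
  | nil => exact ⟨p, rfl, h⟩
  | cons a u ih =>
    obtain ⟨s, hs, hw⟩ := h
    obtain ⟨q, h1, h2⟩ := ih hw
    exact ⟨q, ⟨s, hs, h1⟩, h2⟩

lemma walk_unique {G : LabeledGraph V A} (hdet : G.Deterministic) {p q q' : V} {w : List A}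
    (h : G.Walk p w q) (h' : G.Walk p w q') : q = q' := by
  induction w generalizing p with
  | nil => cases h; cases h'; rfl
  | cons a w ih =>
    obtain ⟨r, hr, hw⟩ := h
    obtain ⟨r', hr', hw'⟩ := h'
    cases hdet _ _ _ _ hr hr'
    exact ih hw hw'

lemma seq_to_walk (G : LabeledGraph V A) (w : List A) (f : ℕ → V)
    (hf : ∀ k (h : k < w.length), G.Edge (f k) (w[k]'h) (f (k + 1))) :
    G.Walk (f 0) w (f w.length) := by
  induction w generalizing f with
  | nil => rfl
  | cons a w ih =>
    refine ⟨f 1, hf 0 (by simp), ?_⟩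
    have := ih (fun k => f (k + 1)) (fun k h => by
      have := hf (k + 1) (by simpa using Nat.succ_lt_succ h)
      simpa using this)
    simpa [Nat.succ_eq_add_one] using this

lemma walk_to_seq (G : LabeledGraph V A) {p q : V} {w : List A} (h : G.Walk p w q) :
    ∃ f : ℕ → V, f 0 = p ∧ f w.length = q ∧
      ∀ k (hk : k < w.length), G.Edge (f k) (w[k]'hk) (f (k + 1)) := by
  induction w generalizing p with
  | nil => exact ⟨fun _ => p, rfl, h.symm ▸ rfl, by intro k hk; simp at hk⟩
  | cons a w ih =>
    obtain ⟨r, hr, hw⟩ := h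
    obtain ⟨f, hf0, hfl, hfe⟩ := ih hw
    refine ⟨fun k => match k with | 0 => p | k + 1 => f k, rfl, by simpa using hfl, ?_⟩
    intro k hk
    match k with
    | 0 => simpa [hf0] using hr
    | k + 1 =>
      have := hfe k (by simpa using Nat.lt_of_succ_lt_succ hk)
      simpa using this

end LabeledGraph

/-- The window `x[i..i+k)`. -/
def win (x : ℤ → A) (i : ℤ) (k : ℕ) : List A :=
  List.ofFn (fun t : Fin k => x (i + t))

@[simp] lemma win_length (x : ℤ → A) (i : ℤ) (k : ℕ) : (win x i k).length = k := by
  simp [win]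

@[simp] lemma win_zero (x : ℤ → A) (i : ℤ) : win x i 0 = [] := by simp [win]

lemma win_getElem (x : ℤ → A) (i : ℤ) (k : ℕ) (t : ℕ) (ht : t < (win x i k).length) :
    (win x i k)[t] = x (i + t) := by
  simp [win]

lemma win_succ_cons (x : ℤ → A) (i : ℤ) (k : ℕ) :
    win x i (k + 1) = x i :: win x (i + 1) k := by
  apply List.ext_getElem (by simp)
  intro t h1 h2
  rcases t with _ | t <;> simp [win_getElem] <;> ring_nf

lemma win_succ_snoc (x : ℤ → A) (i : ℤ) (k : ℕ) :
    win x i (k + 1) = win x i k ++ [x (i + k)] := by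
  apply List.ext_getElem (by simp)
  intro t h1 h2
  simp only [win_getElem]
  rcases lt_or_ge t k with h | h
  · rw [List.getElem_append_left (by simpa using h), win_getElem]
  · have : t = k := by simp at h2; omega
    subst this
    rw [List.getElem_append_right (by simp)]
    simp

lemma win_add (x : ℤ → A) (i : ℤ) (k l : ℕ) :
    win x i (k + l) = win x i k ++ win x (i + k) l := by
  induction l with
  | zero => simp
  | succ l ih =>
    rw [show k + (l + 1) = (k + l) + 1 from rfl, win_succ_snoc, ih, win_succ_snoc,
      List.append_assoc]
    push_cast
    ring_nf

lemma appearsIn_win (x : ℤ → A) (i : ℤ) (k : ℕ) : AppearsIn (win x i k) x := by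
  refine ⟨i, fun n => ?_⟩
  have : (win x i k).get n = (win x i k)[(n : ℕ)] := rfl
  rw [this, win_getElem]

lemma mem_lang_of_appears {X : Set (ℤ → A)} {x : ℤ → A} (hx : x ∈ X) {w : List A}
    (h : AppearsIn w x) : w ∈ lang X := ⟨x, hx, h⟩

lemma appears_prefix {x : ℤ → A} {u v : List A} (h : AppearsIn (u ++ v) x) :
    AppearsIn u x := by
  obtain ⟨i, hi⟩ := h
  refine ⟨i, fun n => ?_⟩
  have hn : (n : ℕ) < (u ++ v).length := by
    simp only [List.length_append]
    exact lt_of_lt_of_le n.2 (Nat.le_add_right _ _)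
  have := hi ⟨n, hn⟩
  simp only [List.get_eq_getElem] at this ⊢
  rw [this, List.getElem_append_left n.2]

lemma lang_prefix {X : Set (ℤ → A)} {u v : List A} (h : u ++ v ∈ lang X) : u ∈ lang X := by
  obtain ⟨x, hx, hap⟩ := h
  exact ⟨x, hx, appears_prefix hap⟩

/-- A decreasing sequence of nonempty subsets of a finite type has nonempty
intersection. -/
lemma iInter_nonempty_of_antitone [Finite V] (T : ℕ → Set V)
    (hdec : ∀ k, T (k + 1) ⊆ T k) (hne : ∀ k, (T k).Nonempty) :
    (⋂ k, T k).Nonempty := by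
  have hmono : ∀ {j k}, j ≤ k → T k ⊆ T j := by
    intro j k h
    induction h with
    | refl => exact subset_rfl
    | step h ih => exact fun {a} => fun ha => ih (hdec _ ha)
  set a : ℕ → ℕ := fun k => (T k).ncard with ha
  have hrange : (Set.range a).Nonempty := ⟨a 0, 0, rfl⟩
  obtain ⟨K, hK⟩ := Nat.sInf_mem hrange
  obtain ⟨p, hp⟩ := hne K
  refine ⟨p, Set.mem_iInter.2 fun k => ?_⟩
  rcases le_total k K with h | h
  · exact hmono h hp
  · have hsub : T k ⊆ T K := hmono h
    have hcard : (T K).ncard ≤ (T k).ncard := by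
      show a K ≤ a k
      rw [hK]
      exact Nat.sInf_le ⟨k, rfl⟩
    have := Set.eq_of_subset_of_ncard_le hsub hcard (Set.toFinite _)
    rw [this]; exact hp


namespace LabeledGraph

lemma exists_walk_of_mem_lang (G : LabeledGraph V A) {w : List A}
    (h : w ∈ lang G.shift) : ∃ p q, G.Walk p w q := by
  obtain ⟨x, ⟨v, hv⟩, i, hi⟩ := h
  refine ⟨v i, v (i + w.length), ?_⟩
  have key := G.seq_to_walk w (fun k => v (i + k)) ?_
  · simpa using key
  · intro k hk
    have h1 := hv (i + k)
    have h2 := hi ⟨k, hk⟩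
    simp only [List.get_eq_getElem] at h2
    have h3 : x (i + k) = w[k]'hk := h2
    rw [h3] at h1
    have e : i + ((k + 1 : ℕ) : ℤ) = i + k + 1 := by push_cast; ring
    show G.Edge (v (i + (k : ℤ))) (w[k]'hk) (v (i + ((k + 1 : ℕ) : ℤ)))
    rw [e]
    exact h1

lemma walk_mem_lang (G : LabeledGraph V A) (hess : G.Essential) {p q : V}
    {w : List A} (h : G.Walk p w q) : w ∈ lang G.shift := by
  classical
  choose outA outV hout using fun v : V => (hess v).1
  choose incA incV hinc using fun v : V => (hess v).2
  obtain ⟨f, hf0, hfl, hfe⟩ := G.walk_to_seq h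
  set L : ℕ := w.length with hL
  let g : ℕ → V := fun k => Nat.rec q (fun _ v => outV v) k
  let b : ℕ → V := fun k => Nat.rec p (fun _ v => incV v) k
  let vv : ℤ → V := fun j => if j < 0 then b (-j).toNat
    else if j ≤ (L : ℤ) then f j.toNat else g (j - L).toNat
  let xx : ℤ → A := fun j =>
    if hj : 0 ≤ j ∧ j < (L : ℤ) then w[j.toNat]'(by omega)
    else if j < 0 then incA (b (-j - 1).toNat) else outA (g (j - L).toNat)
  have hvv_neg : ∀ j : ℤ, j < 0 → vv j = b (-j).toNat := fun j hj => if_pos hj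
  have hvv_mid : ∀ j : ℤ, ¬ j < 0 → j ≤ (L : ℤ) → vv j = f j.toNat := fun j h1 h2 => by
    show (if j < 0 then b (-j).toNat
      else if j ≤ (L : ℤ) then f j.toNat else g (j - L).toNat) = _
    rw [if_neg h1, if_pos h2]
  have hvv_hi : ∀ j : ℤ, ¬ j < 0 → ¬ j ≤ (L : ℤ) → vv j = g (j - L).toNat := fun j h1 h2 => by
    show (if j < 0 then b (-j).toNat
      else if j ≤ (L : ℤ) then f j.toNat else g (j - L).toNat) = _
    rw [if_neg h1, if_neg h2]
  have hxx_mid : ∀ (j : ℤ) (hj : 0 ≤ j ∧ j < (L : ℤ)), xx j = w[j.toNat]'(by omega) :=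
    fun j hj => dif_pos hj
  have hxx_neg : ∀ j : ℤ, j < 0 → xx j = incA (b (-j - 1).toNat) := fun j hjn => by
    show (if hc : 0 ≤ j ∧ j < (L : ℤ) then w[j.toNat]'(by omega)
      else if j < 0 then incA (b (-j - 1).toNat) else outA (g (j - L).toNat)) = _
    rw [dif_neg (by omega), if_pos hjn]
  have hxx_hi : ∀ j : ℤ, ¬ j < 0 → ¬ j < (L : ℤ) → xx j = outA (g (j - L).toNat) :=
    fun j h1 h2 => by
    show (if hc : 0 ≤ j ∧ j < (L : ℤ) then w[j.toNat]'(by omega)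
      else if j < 0 then incA (b (-j - 1).toNat) else outA (g (j - L).toNat)) = _
    rw [dif_neg (by omega), if_neg h1]
  refine ⟨xx, ⟨vv, ?_⟩, 0, ?_⟩
  · intro j
    by_cases h1 : j < 0
    · have e1 : vv j = b ((-j - 1).toNat + 1) := by
        have e : (-j).toNat = (-j - 1).toNat + 1 := by omega
        rw [hvv_neg j h1, e]
      have e2 : xx j = incA (b (-j - 1).toNat) := hxx_neg j h1
      have e3 : vv (j + 1) = b ((-j - 1).toNat) := by
        by_cases h2 : j + 1 < 0
        · have e : (-(j + 1)).toNat = (-j - 1).toNat := by omega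
          rw [hvv_neg _ h2, e]
        · rw [hvv_mid _ h2 (by omega)]
          have e : (j + 1).toNat = 0 := by omega
          rw [e, hf0]
          have e' : (-j - 1).toNat = 0 := by omega
          rw [e']
          rfl
      rw [e1, e2, e3]
      exact hinc (b ((-j - 1).toNat))
    · by_cases h2 : j < (L : ℤ)
      · have e1 : vv j = f j.toNat := hvv_mid j h1 (by omega)
        have e2 : xx j = w[j.toNat]'(by omega) := hxx_mid j ⟨by omega, h2⟩
        have e3 : vv (j + 1) = f (j.toNat + 1) := by
          have e : (j + 1).toNat = j.toNat + 1 := by omega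
          rw [hvv_mid _ (by omega) (by omega), e]
        rw [e1, e2, e3]
        exact hfe j.toNat (by omega)
      · have e2 : xx j = outA (g ((j - L).toNat)) := hxx_hi j h1 h2
        have e3 : vv (j + 1) = g ((j - L).toNat + 1) := by
          have e : (j + 1 - (L : ℤ)).toNat = (j - L).toNat + 1 := by omega
          rw [hvv_hi _ (by omega) (by omega), e]
        have e1 : vv j = g ((j - L).toNat) := by
          by_cases h3 : j ≤ (L : ℤ)
          · rw [hvv_mid j h1 h3]
            have e : j.toNat = L := by omega
            rw [e, hfl]
            have e' : (j - (L : ℤ)).toNat = 0 := by omega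
            rw [e']
            rfl
          · exact hvv_hi j h1 h3
        rw [e1, e2, e3]
        exact hout (g ((j - L).toNat))
  · intro n
    have hn : (n : ℕ) < L := by rw [hL]; exact n.isLt
    have e2 : xx (0 + (n : ℕ)) = w[(0 + ((n : ℕ) : ℤ)).toNat]'(by omega) :=
      hxx_mid _ ⟨by omega, by omega⟩
    rw [e2]
    have e : ((0 : ℤ) + ((n : ℕ) : ℤ)).toNat = (n : ℕ) := by omega
    simp only [List.get_eq_getElem, e]

lemma mem_shift_of_windows [Finite V] (G : LabeledGraph V A) (hdet : G.Deterministic)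
    (x : ℤ → A) (hwin : ∀ (i : ℤ) (k : ℕ), win x i k ∈ lang G.shift) :
    x ∈ G.shift := by
  classical
  -- R j p : p is compatible with the past and future of x at time j
  let R : ℤ → V → Prop := fun j p =>
    (∀ k : ℕ, ∃ p', G.Walk p' (win x (j - k) k) p) ∧
    (∀ k : ℕ, ∃ q, G.Walk p (win x j k) q)
  -- R 0 is nonempty
  have hR0 : ∃ p, R 0 p := by
    have h2 : ∀ k : ℕ, ({p | (∃ p', G.Walk p' (win x (0 - k) k) p) ∧
        (∃ q, G.Walk p (win x 0 k) q)} : Set V).Nonempty := by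
      intro k
      obtain ⟨p, q, hw⟩ := G.exists_walk_of_mem_lang (hwin (0 - k) (k + k))
      rw [win_add] at hw
      obtain ⟨m, hm1, hm2⟩ := G.walk_split hw
      have e : (0 : ℤ) - k + k = 0 := by ring
      rw [e] at hm2
      exact ⟨m, ⟨p, hm1⟩, ⟨q, hm2⟩⟩
    have hdec : ∀ k : ℕ, ({p | (∃ p', G.Walk p' (win x (0 - (k+1)) (k+1)) p) ∧
        (∃ q, G.Walk p (win x 0 (k+1)) q)} : Set V) ⊆
        {p | (∃ p', G.Walk p' (win x (0 - k) k) p) ∧ (∃ q, G.Walk p (win x 0 k) q)} := by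
      rintro k p ⟨⟨p', hp'⟩, ⟨q, hq⟩⟩
      constructor
      · rw [win_succ_cons] at hp'
        obtain ⟨r, _, hr⟩ := hp'
        have e : (0 : ℤ) - ((k : ℤ) + 1) + 1 = 0 - k := by push_cast; ring
        rw [e] at hr
        exact ⟨r, hr⟩
      · rw [win_succ_snoc] at hq
        obtain ⟨m, hm1, _⟩ := G.walk_split hq
        exact ⟨m, hm1⟩
    obtain ⟨p, hp⟩ := iInter_nonempty_of_antitone _ hdec h2
    simp only [Set.mem_iInter, Set.mem_setOf_eq] at hp
    exact ⟨p, fun k => (hp k).1, fun k => (hp k).2⟩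
  -- forward extension
  have fwd : ∀ (j : ℤ) (p : V), R j p → ∃ q, R (j + 1) q ∧ G.Edge p (x j) q := by
    intro j p hp
    have hb : ∀ k : ℕ, ∃ p', G.Walk p' (win x (j - k) k) p := hp.1
    have hf : ∀ k : ℕ, ∃ q, G.Walk p (win x j k) q := hp.2
    obtain ⟨q0, hq0⟩ := hf 1
    rw [win_succ_cons, win_zero] at hq0
    obtain ⟨q, hq, heq⟩ := hq0
    have heq' : q = q0 := heq
    subst heq'
    refine ⟨q, ⟨?_, ?_⟩, hq⟩
    · intro k
      match k with
      | 0 => exact ⟨q, rfl⟩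
      | k + 1 =>
        obtain ⟨p', hp'⟩ := hb k
        have hw1 : G.Walk p [x j] q := ⟨q, hq, rfl⟩
        rw [show j + 1 - ((k : ℕ) + 1 : ℕ) = j - k by push_cast; ring, win_succ_snoc,
          show (j : ℤ) - k + k = j by ring]
        exact ⟨p', G.walk_append hp' hw1⟩
    · intro k
      obtain ⟨q', hq'⟩ := hf (k + 1)
      rw [win_succ_cons] at hq'
      obtain ⟨r, hr, hw⟩ := hq'
      cases hdet _ _ _ _ hq hr
      exact ⟨q', hw⟩
  -- backward extension
  have bwd : ∀ (j : ℤ) (q : V), R (j + 1) q → ∃ p, R j p ∧ G.Edge p (x j) q := by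
    intro j q hq'''
    have hb : ∀ k : ℕ, ∃ p', G.Walk p' (win x (j + 1 - k) k) q := hq'''.1
    have hf : ∀ k : ℕ, ∃ q', G.Walk q (win x (j + 1) k) q' := hq'''.2
    have h2 : ∀ k : ℕ, ({p | (∃ p', G.Walk p' (win x (j - k) k) p) ∧
        G.Edge p (x j) q} : Set V).Nonempty := by
      intro k
      obtain ⟨p', hp'⟩ := hb (k + 1)
      rw [show j + 1 - ((k : ℕ) + 1 : ℕ) = j - k by push_cast; ring, win_succ_snoc,
        show (j : ℤ) - k + k = j by ring] at hp'
      obtain ⟨m, hm1, hm2⟩ := G.walk_split hp'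
      obtain ⟨r, hr, heq⟩ := hm2
      have heq' : r = q := heq
      subst heq'
      exact ⟨m, ⟨p', hm1⟩, hr⟩
    have hdec : ∀ k : ℕ, ({p | (∃ p', G.Walk p' (win x (j - (k+1)) (k+1)) p) ∧
        G.Edge p (x j) q} : Set V) ⊆
        {p | (∃ p', G.Walk p' (win x (j - k) k) p) ∧ G.Edge p (x j) q} := by
      rintro k p ⟨⟨p', hp'⟩, he⟩
      refine ⟨?_, he⟩
      rw [win_succ_cons] at hp'
      obtain ⟨r, _, hr⟩ := hp'
      have e : j - ((k : ℤ) + 1) + 1 = j - k := by push_cast; ring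
      rw [e] at hr
      exact ⟨r, hr⟩
    obtain ⟨p, hp⟩ := iInter_nonempty_of_antitone _ hdec h2
    simp only [Set.mem_iInter, Set.mem_setOf_eq] at hp
    have hedge : G.Edge p (x j) q := (hp 0).2
    refine ⟨p, ⟨fun k => (hp k).1, ?_⟩, hedge⟩
    intro k
    match k with
    | 0 => exact ⟨p, rfl⟩
    | k + 1 =>
      obtain ⟨q', hq'⟩ := hf k
      rw [win_succ_cons]
      exact ⟨q', q, hedge, hq'⟩
  -- build the bi-infinite vertex sequence
  obtain ⟨p₀, hp₀⟩ := hR0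
  choose fq hq1 hq2 using fwd
  choose bp hb1 hb2 using bwd
  have hp₀' : R ((0 : ℕ) : ℤ) p₀ := by exact_mod_cast hp₀
  let vf : (k : ℕ) → {p : V // R (k : ℤ) p} := fun k =>
    Nat.rec ⟨p₀, hp₀'⟩ (fun k pk => ⟨fq (k : ℤ) pk.1 pk.2, by
      rw [show ((k + 1 : ℕ) : ℤ) = (k : ℤ) + 1 by push_cast; ring]
      exact hq1 (k : ℤ) pk.1 pk.2⟩) k
  have hvf_edge : ∀ k : ℕ, G.Edge (vf k).1 (x k) (vf (k + 1)).1 :=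
    fun k => hq2 (k : ℤ) (vf k).1 (vf k).2
  have hp₀'' : R (-((0 : ℕ) : ℤ)) p₀ := by simpa using hp₀
  have hcast : ∀ (k : ℕ) (pk : {p : V // R (-(k : ℤ)) p}), R (-(k : ℤ) - 1 + 1) pk.1 := by
    intro k pk
    rw [show -(k : ℤ) - 1 + 1 = -(k : ℤ) by ring]
    exact pk.2
  let vb : (k : ℕ) → {p : V // R (-(k : ℤ)) p} := fun k =>
    Nat.rec ⟨p₀, hp₀''⟩ (fun k pk => ⟨bp (-(k : ℤ) - 1) pk.1 (hcast k pk), by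
      rw [show (-((k + 1 : ℕ) : ℤ)) = -(k : ℤ) - 1 by push_cast; ring]
      exact hb1 (-(k : ℤ) - 1) pk.1 (hcast k pk)⟩) k
  have hvb_edge : ∀ k : ℕ, G.Edge (vb (k + 1)).1 (x (-(k : ℤ) - 1)) (vb k).1 :=
    fun k => hb2 (-(k : ℤ) - 1) (vb k).1 (hcast k (vb k))
  refine ⟨fun j => if 0 ≤ j then (vf j.toNat).1 else (vb (-j).toNat).1, ?_⟩
  intro j
  show G.Edge (if 0 ≤ j then (vf j.toNat).1 else (vb (-j).toNat).1) (x j)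
    (if 0 ≤ j + 1 then (vf (j + 1).toNat).1 else (vb (-(j + 1)).toNat).1)
  by_cases h1 : 0 ≤ j
  · rw [if_pos h1, if_pos (by omega : (0:ℤ) ≤ j + 1)]
    have e : (j + 1).toNat = j.toNat + 1 := by omega
    rw [e]
    have e5 : x j = x ((j.toNat : ℕ) : ℤ) := by congr 1; omega
    rw [e5]
    exact hvf_edge j.toNat
  · rw [if_neg h1]
    have e : (-j).toNat = (-j - 1).toNat + 1 := by omega
    rw [e]
    by_cases h2 : 0 ≤ j + 1
    · rw [if_pos h2]
      have e2 : (j + 1).toNat = 0 := by omega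
      have e3 : (-j - 1).toNat = 0 := by omega
      rw [e2, e3]
      have e5 : x j = x (-((0 : ℕ) : ℤ) - 1) := by congr 1; omega
      rw [e5]
      exact hvb_edge 0
    · rw [if_neg h2]
      have e2 : (-(j + 1)).toNat = (-j - 1).toNat := by omega
      rw [e2]
      have e5 : x j = x (-(((-j - 1).toNat : ℕ) : ℤ) - 1) := by congr 1; omega
      rw [e5]
      exact hvb_edge (-j - 1).toNat

end LabeledGraph

end Aux



section Aux2

variable {V A : Type}

/-- The splicing lemma: in an SFT with forbidden words of length at most `N`,
overlaps of length at least `N` can be glued. -/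
lemma splice_lemma {X : Set (ℤ → A)} {F : Set (List A)}
    (hXF : X = { x | ∀ w ∈ F, ¬ AppearsIn w x }) {N : ℕ}
    (hN : ∀ f ∈ F, f.length ≤ N)
    {u w v : List A} (hw : N ≤ w.length)
    (huw : u ++ w ∈ lang X) (hwv : w ++ v ∈ lang X) :
    u ++ (w ++ v) ∈ lang X := by
  classical
  obtain ⟨x, hx, i, hix⟩ := huw
  obtain ⟨y, hy, j, hjy⟩ := hwv
  set a : ℤ := i + u.length with ha
  set z : ℤ → A := fun t => if t < a + w.length then x t else y (t - a + j) with hz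
  have hzlt : ∀ t : ℤ, t < a + w.length → z t = x t := fun t ht => if_pos ht
  have hzge : ∀ t : ℤ, ¬ t < a + w.length → z t = y (t - a + j) := fun t ht => if_neg ht
  -- agreement on the overlap
  have hagree : ∀ s : ℕ, s < w.length → x (i + ((u.length + s : ℕ) : ℤ)) = y (j + (s : ℕ)) := by
    intro s hs
    have h1 := hix ⟨u.length + s, by simp only [List.length_append]; omega⟩
    have h2 := hjy ⟨s, by simp only [List.length_append]; omega⟩
    simp only [List.get_eq_getElem] at h1 h2
    rw [List.getElem_append_right (by omega)] at h1
    rw [List.getElem_append_left hs] at h2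
    rw [h1, h2]
    congr 1
    omega
  -- z agrees with a translate of y on [a, ∞)
  have hzy : ∀ t : ℤ, a ≤ t → z t = y (t - a + j) := by
    intro t ht
    by_cases hc : t < a + w.length
    · rw [hzlt t hc]
      have hs0 : (0 : ℤ) ≤ t - a := by omega
      set s := (t - a).toNat with hsdef
      have hs : s < w.length := by omega
      have e1 : t = i + ((u.length + s : ℕ) : ℤ) := by push_cast; omega
      have e2 : t - a + j = j + (s : ℕ) := by push_cast; omega
      have h3 := hagree s hs
      rw [← e1] at h3
      rw [h3, e2]
    · exact hzge t hc
  -- z is in X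
  have hzX : z ∈ X := by
    rw [hXF]
    intro f hf happ
    obtain ⟨t, ht⟩ := happ
    by_cases hcase : t + f.length ≤ a + w.length
    · -- window in the x part
      rw [hXF] at hx
      refine hx f hf ⟨t, fun n => ?_⟩
      have := ht n
      rwa [hzlt (t + n) (by have := n.2; omega)] at this
    · -- window in the y part
      rw [hXF] at hy
      refine hy f hf ⟨t - a + j, fun n => ?_⟩
      have hfN : f.length ≤ N := hN f hf
      have := ht n
      have hta : a ≤ t + (n : ℕ) := by have := n.2; omega
      rw [hzy (t + n) hta] at this
      rw [show t - a + j + (n : ℕ) = t + (n : ℕ) - a + j by ring]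
      exact this
  -- the concatenation appears in z
  refine ⟨z, hzX, i, fun n => ?_⟩
  have hn := n.2
  simp only [List.length_append] at hn
  simp only [List.get_eq_getElem]
  by_cases hc : (n : ℕ) < u.length + w.length
  · have e1 : z (i + (n : ℕ)) = x (i + (n : ℕ)) := hzlt _ (by omega)
    have h1 := hix ⟨n, by simpa using hc⟩
    simp only [List.get_eq_getElem] at h1
    rw [e1, h1]
    rcases Nat.lt_or_ge (n : ℕ) u.length with h | h
    · rw [List.getElem_append_left h, List.getElem_append_left h]
    · rw [List.getElem_append_right h, List.getElem_append_right h,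
        List.getElem_append_left (by omega)]
  · have e1 : z (i + (n : ℕ)) = y (i + (n : ℕ) - a + j) := hzy _ (by omega)
    have hnu : u.length ≤ (n : ℕ) := by omega
    have h2 := hjy ⟨(n : ℕ) - u.length, by simp only [List.length_append]; omega⟩
    simp only [List.get_eq_getElem] at h2
    have e2 : i + ((n : ℕ) : ℤ) - a + j = j + (((n : ℕ) - u.length : ℕ) : ℤ) := by
      push_cast [hnu]
      ring
    rw [e1, e2, h2]
    rw [List.getElem_append_right (by omega : w.length ≤ (n : ℕ) - u.length)]
    rw [List.getElem_append_right (by omega : u.length ≤ (n : ℕ))]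
    rw [List.getElem_append_right (by omega : w.length ≤ (n : ℕ) - u.length)]
  -- done

namespace LabeledGraph

/-- Synchronizing words are intrinsically synchronizing. -/
lemma sync_intrinsic (G : LabeledGraph V A) (hess : G.Essential) {w : List A} {r : V}
    (hsw : G.transSet Set.univ w = {r}) (hw : w ∈ lang G.shift) :
    IntrinsicallySync G.shift w := by
  refine ⟨hw, fun u v huw hwv => ?_⟩
  obtain ⟨p, q, h1⟩ := G.exists_walk_of_mem_lang huw
  obtain ⟨m1, hu, hw1⟩ := G.walk_split h1
  obtain ⟨p', q', h2⟩ := G.exists_walk_of_mem_lang hwv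
  obtain ⟨m2, hw2, hv⟩ := G.walk_split h2
  have hq : q ∈ G.transSet Set.univ w := ⟨m1, trivial, hw1⟩
  have hm2 : m2 ∈ G.transSet Set.univ w := ⟨p', trivial, hw2⟩
  rw [hsw] at hq hm2
  have hq' : q = r := hq
  have hm2' : m2 = r := hm2
  subst hq'
  subst hm2'
  exact G.walk_mem_lang hess (G.walk_append hu (G.walk_append hw1 hv))

/-- Contradiction from a common loop at two follower-separated vertices. -/
lemma loop_contra (G : LabeledGraph V A) (hdet : G.Deterministic) (hess : G.Essential)
    {F : Set (List A)} (hXF : G.shift = { x | ∀ w ∈ F, ¬ AppearsIn w x }) {N : ℕ}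
    (hN : ∀ f ∈ F, f.length ≤ N)
    {r s : V} {c : List A} (hc : c ≠ []) (hr : G.Walk r c r) (hs : G.Walk s c s)
    {z : List A} (hz1 : z ∈ G.follower r) (hz2 : z ∉ G.follower s)
    {m : List A} (hm : G.transSet Set.univ m = {s}) : False := by
  classical
  have hW : ∀ (k : ℕ) (t : V), G.Walk t c t → G.Walk t (List.replicate k c).flatten t := by
    intro k
    induction k with
    | zero => intro t _; exact rfl
    | succ k ih =>
      intro t ht
      rw [List.replicate_succ, List.flatten_cons]
      exact G.walk_append ht (ih t ht)
  have hlen : ∀ k : ℕ, ((List.replicate k c).flatten).length = k * c.length := by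
    intro k
    induction k with
    | zero => simp
    | succ n ih => rw [List.replicate_succ, List.flatten_cons, List.length_append, ih]; ring
  set W : List A := (List.replicate N c).flatten with hWdef
  have hNle : N ≤ W.length := by
    rw [hWdef, hlen]
    exact Nat.le_mul_of_pos_right N (List.length_pos_iff.mpr hc)
  have hsmem : s ∈ G.transSet Set.univ m := by rw [hm]; rfl
  obtain ⟨p₀, -, hp₀⟩ := hsmem
  have h1 : m ++ W ∈ lang G.shift := G.walk_mem_lang hess (G.walk_append hp₀ (hW N s hs))
  obtain ⟨q', hq'⟩ := hz1
  have h2 : W ++ z ∈ lang G.shift := G.walk_mem_lang hess (G.walk_append (hW N r hr) hq')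
  have h3 := splice_lemma hXF hN hNle h1 h2
  obtain ⟨pa, qa, hwalk⟩ := G.exists_walk_of_mem_lang h3
  obtain ⟨t1, hm1, hrest⟩ := G.walk_split hwalk
  have ht1 : t1 ∈ G.transSet Set.univ m := ⟨pa, trivial, hm1⟩
  rw [hm] at ht1
  have ht1' : t1 = s := ht1
  rw [ht1'] at hrest
  obtain ⟨t2, hW2, hzw⟩ := G.walk_split hrest
  have ht2 : t2 = s := walk_unique hdet hW2 (hW N s hs)
  rw [ht2] at hzw
  exact hz2 ⟨qa, hzw⟩

/-- In an SFT, every long enough word of the language is synchronizing. -/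
lemma long_word_sync [Fintype V] (G : LabeledGraph V A) (hdet : G.Deterministic)
    (hess : G.Essential) (hfs : G.FollowerSeparated) (hsync : G.Synchronizing)
    {F : Set (List A)} (hXF : G.shift = { x | ∀ w ∈ F, ¬ AppearsIn w x }) {N : ℕ}
    (hN : ∀ f ∈ F, f.length ≤ N)
    {w : List A} (hw : w ∈ lang G.shift)
    (hlen : Fintype.card V ^ 2 - Fintype.card V ≤ w.length) :
    ∃ r, G.transSet Set.univ w = {r} := by
  classical
  set M := Fintype.card V ^ 2 - Fintype.card V with hM
  obtain ⟨p1, q1, hw1⟩ := G.exists_walk_of_mem_lang hw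
  refine ⟨q1, Set.eq_singleton_iff_unique_mem.mpr ⟨⟨p1, trivial, hw1⟩, ?_⟩⟩
  rintro q2 ⟨p2, -, hw2⟩
  by_contra hne
  obtain ⟨f1, hf10, hf1l, hf1e⟩ := G.walk_to_seq hw1
  obtain ⟨f2, hf20, hf2l, hf2e⟩ := G.walk_to_seq hw2
  -- the two walks never meet
  have hdist : ∀ k, k ≤ w.length → f1 k ≠ f2 k := by
    intro k hk heq
    apply hne
    have hstep : ∀ d, k + d ≤ w.length → f1 (k + d) = f2 (k + d) := by
      intro d
      induction d with
      | zero => intro _; exact heq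
      | succ d ih =>
        intro hd
        have h1 := hf1e (k + d) (by omega)
        have h2 := hf2e (k + d) (by omega)
        rw [ih (by omega)] at h1
        exact hdet _ _ _ _ h1 h2
    have := hstep (w.length - k) (by omega)
    rw [show k + (w.length - k) = w.length by omega, hf1l, hf2l] at this
    exact this.symm
  -- pigeonhole on pairs of distinct vertices
  have hcard : Fintype.card {pq : V × V // pq.1 ≠ pq.2} = M := by
    have h1 : Fintype.card {pq : V × V // pq.1 = pq.2} = Fintype.card V := by
      refine Fintype.card_congr ⟨fun s => s.1.1, fun v => ⟨(v, v), rfl⟩, ?_, fun v => rfl⟩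
      rintro ⟨⟨a, b⟩, h⟩
      cases h
      rfl
    have h2 := Fintype.card_subtype_compl (fun pq : V × V => pq.1 = pq.2)
    rw [h1, Fintype.card_prod] at h2
    rw [hM, show Fintype.card V ^ 2 = Fintype.card V * Fintype.card V from sq (Fintype.card V),
      ← h2]
  set g : Fin (M + 1) → {pq : V × V // pq.1 ≠ pq.2} :=
    fun i => ⟨(f1 i, f2 i), hdist i (by have := i.2; omega)⟩ with hg
  obtain ⟨i0, j0, hij, hgij⟩ := Fintype.exists_ne_map_eq_of_card_lt g
    (by rw [hcard, Fintype.card_fin]; omega)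
  -- wlog i0 < j0
  have main : ∀ i j : Fin (M + 1), (i : ℕ) < (j : ℕ) → g i = g j → False := by
    intro i j hlt hgeq
    -- the loop word
    set cw : List A := (w.drop i).take ((j : ℕ) - i) with hcdef
    have hclen : cw.length = (j : ℕ) - (i : ℕ) := by
      rw [hcdef, List.length_take, List.length_drop]
      have := j.2
      omega
    have hcne : cw ≠ [] := by
      intro h
      rw [h] at hclen
      simp at hclen
      omega
    have hslice : ∀ f : ℕ → V, (∀ k (hk : k < w.length), G.Edge (f k) (w[k]'hk) (f (k + 1))) →
        G.Walk (f i) cw (f j) := by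
      intro f hf
      have key := G.seq_to_walk cw (fun t => f (i + t)) ?_
      · rw [hclen] at key
        simp only [Nat.add_zero] at key
        rwa [show (i : ℕ) + ((j : ℕ) - (i : ℕ)) = (j : ℕ) by omega] at key
      · intro t ht
        have ht' : t < (j : ℕ) - (i : ℕ) := by rwa [hclen] at ht
        have hjw : (j : ℕ) ≤ w.length := by have := j.2; omega
        have he : cw[t]'ht = w[(i : ℕ) + t]'(by omega) := by
          simp only [hcdef, List.getElem_take, List.getElem_drop]
        rw [he]
        exact hf ((i : ℕ) + t) (by omega)
    have hgi : f1 (i : ℕ) = f1 (j : ℕ) :=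
      congrArg (fun z : {pq : V × V // pq.1 ≠ pq.2} => z.1.1) hgeq
    have hgi2 : f2 (i : ℕ) = f2 (j : ℕ) :=
      congrArg (fun z : {pq : V × V // pq.1 ≠ pq.2} => z.1.2) hgeq
    have hr : G.Walk (f1 i) cw (f1 i) := by
      have := hslice f1 hf1e
      rwa [← hgi] at this
    have hs : G.Walk (f2 i) cw (f2 i) := by
      have := hslice f2 hf2e
      rwa [← hgi2] at this
    have hrs : f1 (i : ℕ) ≠ f2 (i : ℕ) := hdist i (by have := i.2; omega)
    by_cases hsub : G.follower (f1 i) ⊆ G.follower (f2 i)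
    · by_cases hsub2 : G.follower (f2 i) ⊆ G.follower (f1 i)
      · exact hrs (hfs _ _ (Set.Subset.antisymm hsub hsub2))
      · obtain ⟨z, hz1, hz2⟩ := Set.not_subset.mp hsub2
        obtain ⟨m, hm⟩ := hsync (f1 i)
        exact G.loop_contra hdet hess hXF hN hcne hs hr hz1 hz2 hm
    · obtain ⟨z, hz1, hz2⟩ := Set.not_subset.mp hsub
      obtain ⟨m, hm⟩ := hsync (f2 i)
      exact G.loop_contra hdet hess hXF hN hcne hr hs hz1 hz2 hm
  rcases Nat.lt_or_ge (i0 : ℕ) (j0 : ℕ) with h | h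
  · exact main i0 j0 h hgij
  · have : (j0 : ℕ) < (i0 : ℕ) := by
      rcases Nat.lt_or_ge (j0 : ℕ) (i0 : ℕ) with h' | h'
      · exact h'
      · exact absurd (Fin.ext (le_antisymm h' h)) hij
    exact main j0 i0 this hgij.symm

end LabeledGraph

end Aux2

/-- Let `G` be a follower-separated, synchronizing, deterministic presentation
over a finite alphabet, with `n` vertices. Then `⟨G⟩` is a shift of finite
type if and only if `⟨G⟩` is `(n² − n)`-step. -/
theorem stmt8 {V A : Type} [Fintype V] [Fintype A] (G : LabeledGraph V A)
    (hdet : G.Deterministic) (hess : G.Essential)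
    (hfs : G.FollowerSeparated) (hsync : G.Synchronizing)
    (n : ℕ) (hn : n = Fintype.card V) :
    IsSFT G.shift ↔ MStep G.shift (n ^ 2 - n) := by
  classical
  constructor
  · rintro ⟨F, hFfin, hXF⟩
    have hbdd : ∃ N, ∀ f ∈ F, f.length ≤ N := by
      obtain ⟨N, hN⟩ := (hFfin.image List.length).bddAbove
      exact ⟨N, fun f hf => hN (Set.mem_image_of_mem _ hf)⟩
    obtain ⟨N, hN⟩ := hbdd
    intro w hw hwl
    obtain ⟨r, hr⟩ := G.long_word_sync hdet hess hfs hsync hXF hN hw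
      (by rw [← hn]; exact hwl)
    exact G.sync_intrinsic hess hr hw
  · intro hstep
    set M := n ^ 2 - n with hMdef
    refine ⟨{w : List A | w.length = M + 1 ∧ w ∉ lang G.shift}, ?_, ?_⟩
    · exact (List.finite_length_eq A (M + 1)).subset fun w hw => hw.1
    · ext x
      constructor
      · rintro hx w ⟨hwl, hwn⟩ happ
        exact hwn ⟨x, hx, happ⟩
      · intro hx
        have hbase : ∀ i : ℤ, win x i (M + 1) ∈ lang G.shift := by
          intro i
          by_contra hcon
          exact hx (win x i (M + 1)) ⟨win_length x i (M + 1), hcon⟩ (appearsIn_win x i (M + 1))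
        have hlong : ∀ (d : ℕ) (i : ℤ), win x i (M + 1 + d) ∈ lang G.shift := by
          intro d
          induction d with
          | zero => exact hbase
          | succ d ih =>
            intro i
            rw [show M + 1 + (d + 1) = (M + 1 + d) + 1 by omega, win_succ_cons]
            rw [show M + 1 + d = (M + d) + 1 by omega, win_succ_snoc]
            have h1 : win x (i + 1) (M + d) ∈ lang G.shift := by
              apply lang_prefix (v := [x (i + 1 + (M + d : ℕ))])
              rw [← win_succ_snoc, show (M + d) + 1 = M + 1 + d by omega]
              exact ih (i + 1)
            have h2 := hstep _ h1 (by rw [win_length]; omega)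
            have h3 := h2.2 [x i] [x (i + 1 + (M + d : ℕ))] ?_ ?_
            · exact h3
            · rw [show ([x i] ++ win x (i + 1) (M + d) : List A) = win x i ((M + d) + 1) by
                rw [win_succ_cons]; rfl]
              rw [show (M + d) + 1 = M + 1 + d by omega]
              exact ih i
            · rw [← win_succ_snoc, show (M + d) + 1 = M + 1 + d by omega]
              exact ih (i + 1)
        have hwin : ∀ (i : ℤ) (k : ℕ), win x i k ∈ lang G.shift := by
          intro i k
          rcases Nat.lt_or_ge k (M + 1) with hk | hk
          · apply lang_prefix (v := win x (i + k) (M + 1 - k))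
            rw [← win_add, show k + (M + 1 - k) = M + 1 by omega]
            exact hbase i
          · rw [show k = M + 1 + (k - (M + 1)) by omega]
            exact hlong _ i
        exact G.mem_shift_of_windows hdet x hwin
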